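/- Let ρ > 0, a = ρ/(2√2), f_z(u) = (1/2) erfc(√2(z−u)), and define κ^ℝ(z,w) := √π e^{z²+w²} ( ∫_{−a}^{a} W(f_w, f_z)(u) du + f_w(a) f_z(−a) − f_z(a) f_w(−a) ), where W(f,g) = f g' − g f'. Then as ρ → ∞ (for fixed z,w ∈ ℂ), κ^ℝ(z,w) converges to κ^W(z,w) := √π e^{z²+w²} ∫_{−∞}^{∞} W(f_w, f_z)(u) du. -/

import Mathlib

/-!
The boundary terms of `κ^ℝ` die out because `f_z(u) → 1` as `u → +∞` and `f_z(u) → 0` as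
`u → -∞`, and the truncated integral converges to the full one because the Wronskian is integrable:
each `f` is continuous with limits at both ends, hence bounded, and each `f'` is a Gaussian.

Both limits of `f_z` reduce to `erf (v + a) → 1` as the real number `a → +∞`. As the integral of
`(2/√π) e^{-ζ²}` along `[0, z]`, `erf z` equals `(2/√π) (G z - G 0)` for any primitive `G` of
`e^{-ζ²}` (one exists by Morera's theorem on `ℂ`), so `erf' = (2/√π) e^{-ζ²}` and the mean value
inequality on the segment `[a, a + v]` gives
`‖erf (a + v) - erf a‖ ≤ (2/√π) ‖v‖ e^{(Im v)² - (a - |Re v|)²}`; on the real line, `erf a → 1`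
is the Gaussian integral.
-/

open Complex intervalIntegral MeasureTheory Filter

/-- The error function, extended to an entire function of a complex variable. -/
noncomputable def cerf (z : ℂ) : ℂ :=
  (2 / Real.sqrt Real.pi) * z * ∫ s in (0:ℝ)..1, Complex.exp (-((s:ℂ) * z)^2)

/-- The complementary error function `erfc z = 1 − erf z`, entire in `z`. -/
noncomputable def cerfc (z : ℂ) : ℂ := 1 - cerf z

/-- `f_z(u) = (1/2) erfc(√2(z−u))`, as a function of a real variable `u`. -/
noncomputable def fz (z : ℂ) (u : ℝ) : ℂ := (1/2) * cerfc (Real.sqrt 2 * (z - (u:ℂ)))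

/-- The Wronskian `W(f_w, f_z)(u) = f_w(u) f_z'(u) − f_z(u) f_w'(u)` (derivatives in `u`). -/
noncomputable def Wr (z w : ℂ) (u : ℝ) : ℂ :=
  fz w u * deriv (fz z) u - fz z u * deriv (fz w) u

/-- The pre-kernel `κ^ℝ(z,w)`, with `a = ρ/(2√2)`. -/
noncomputable def kappaR (ρ : ℝ) (z w : ℂ) : ℂ :=
  (Real.sqrt Real.pi : ℂ) * Complex.exp (z^2 + w^2) *
    ((∫ u in (-(ρ/(2*Real.sqrt 2)))..(ρ/(2*Real.sqrt 2)), Wr z w u)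
      + fz w (ρ/(2*Real.sqrt 2)) * fz z (-(ρ/(2*Real.sqrt 2)))
      - fz z (ρ/(2*Real.sqrt 2)) * fz w (-(ρ/(2*Real.sqrt 2))))

/-- The bulk pre-kernel of the symplectic Ginibre ensemble. -/
noncomputable def kappaW (z w : ℂ) : ℂ :=
  (Real.sqrt Real.pi : ℂ) * Complex.exp (z^2 + w^2) * ∫ u : ℝ, Wr z w u

open scoped Real Topology

theorem cerf_eq_of_hasDerivAt {G : ℂ → ℂ} (hG : ∀ ζ, HasDerivAt G (cexp (-ζ ^ 2)) ζ) (z : ℂ) :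
    cerf z = 2 / √π * (G z - G 0) := by
  have hpath : ∀ s ∈ Set.uIcc (0 : ℝ) 1,
      HasDerivAt (fun s : ℝ => G (s * z)) (z * cexp (-(s * z) ^ 2)) s := fun s _ =>
    ((hG _).comp (s : ℂ) ((hasDerivAt_id (s : ℂ)).mul_const z) |>.congr_deriv
      (by simp [mul_comm])).comp_ofReal
  rw [cerf, mul_assoc, ← intervalIntegral.integral_const_mul, integral_eq_sub_of_hasDerivAt hpath
    (by apply Continuous.intervalIntegrable; fun_prop)]
  simp

theorem hasDerivAt_cerf (z : ℂ) : HasDerivAt cerf (2 / √π * cexp (-z ^ 2)) z := by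
  obtain ⟨G, hG⟩ := (show Differentiable ℂ fun ζ : ℂ => cexp (-ζ ^ 2) by fun_prop).isExactOn_univ
  have hG' : ∀ ζ, HasDerivAt G (cexp (-ζ ^ 2)) ζ := fun ζ => hG ζ (Set.mem_univ ζ)
  rw [funext (cerf_eq_of_hasDerivAt hG')]
  exact ((hG' z).sub_const (G 0)).const_mul _

theorem cerf_neg (z : ℂ) : cerf (-z) = -cerf z := by
  simp only [cerf, mul_neg, neg_sq, neg_mul]

theorem tendsto_cerf_ofReal_atTop : Tendsto (fun a : ℝ => cerf a) atTop (𝓝 1) := by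
  have hgauss : Tendsto (fun a : ℝ => ∫ t in (0 : ℝ)..a, Real.exp (-t ^ 2)) atTop
      (𝓝 (√π / 2)) := by
    have h := intervalIntegral_tendsto_integral_Ioi 0
      (integrable_exp_neg_mul_sq one_pos).integrableOn tendsto_id
    have hval : ∫ t in Set.Ioi (0 : ℝ), Real.exp (-t ^ 2) = √π / 2 := by
      simpa using integral_gaussian_Ioi 1
    simpa [hval] using h
  have hcerf : ∀ a : ℝ, cerf a = 2 / √π * ((∫ t in (0 : ℝ)..a, Real.exp (-t ^ 2) : ℝ) : ℂ) := by
    intro a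
    have hftc : ∀ t ∈ Set.uIcc (0 : ℝ) a,
        HasDerivAt (fun t : ℝ => cerf t) (2 / √π * cexp (-(t : ℂ) ^ 2)) t :=
      fun t _ => (hasDerivAt_cerf t).comp_ofReal
    rw [← intervalIntegral.integral_ofReal, ← intervalIntegral.integral_const_mul]
    push_cast
    rw [integral_eq_sub_of_hasDerivAt hftc (by apply Continuous.intervalIntegrable; fun_prop)]
    simp [cerf]
  have hpi : (√π : ℂ) ≠ 0 := by exact_mod_cast (Real.sqrt_pos.mpr Real.pi_pos).ne'
  convert ((continuous_ofReal.tendsto _).comp hgauss).const_mul (2 / (√π : ℂ)) using 1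
  · exact funext hcerf
  · push_cast
    field_simp

theorem norm_cexp_neg_sq_le {ζ : ℂ} {r h : ℝ} (hr : 0 ≤ r) (hre : r ≤ ζ.re) (him : |ζ.im| ≤ h) :
    ‖cexp (-ζ ^ 2)‖ ≤ Real.exp (h ^ 2 - r ^ 2) := by
  rw [norm_exp, Real.exp_le_exp]
  have hsq : (-ζ ^ 2).re = ζ.im ^ 2 - ζ.re ^ 2 := by simp [sq]
  rw [hsq]
  nlinarith [sq_abs ζ.im, abs_nonneg ζ.im]

theorem norm_cerf_add_sub_cerf_le (v : ℂ) {a : ℝ} (ha : |v.re| ≤ a) :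
    ‖cerf (a + v) - cerf a‖ ≤ 2 / √π * Real.exp (v.im ^ 2 - (a - |v.re|) ^ 2) * ‖v‖ := by
  have hseg : ∀ ζ ∈ segment ℝ (a : ℂ) (a + v), a - |v.re| ≤ ζ.re ∧ |ζ.im| ≤ |v.im| := by
    rw [segment_eq_image']
    rintro _ ⟨θ, ⟨hθ0, hθ1⟩, rfl⟩
    simp only [add_sub_cancel_left, add_re, ofReal_re, smul_re, add_im, ofReal_im, smul_im,
      zero_add, smul_eq_mul, abs_mul, abs_of_nonneg hθ0]
    constructor
    · nlinarith [neg_abs_le v.re, abs_nonneg v.re]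
    · nlinarith [abs_nonneg v.im]
  have hbound : ∀ ζ ∈ segment ℝ (a : ℂ) (a + v),
      ‖deriv cerf ζ‖ ≤ 2 / √π * Real.exp (v.im ^ 2 - (a - |v.re|) ^ 2) := by
    intro ζ hζ
    rw [(hasDerivAt_cerf ζ).deriv, norm_mul]
    gcongr
    · simp [abs_of_nonneg (Real.sqrt_nonneg π)]
    · simpa only [sq_abs] using norm_cexp_neg_sq_le (by linarith) (hseg ζ hζ).1 (hseg ζ hζ).2
  simpa using (convex_segment _ _).norm_image_sub_le_of_norm_deriv_le
    (fun ζ _ => (hasDerivAt_cerf ζ).differentiableAt) hbound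
    (left_mem_segment ℝ _ _) (right_mem_segment ℝ _ _)

theorem tendsto_cerf_add_atTop (v : ℂ) : Tendsto (fun a : ℝ => cerf (v + a)) atTop (𝓝 1) := by
  have hdecay : Tendsto (fun a : ℝ => 2 / √π * Real.exp (v.im ^ 2 - (a - |v.re|) ^ 2) * ‖v‖)
      atTop (𝓝 0) := by
    have hsq : Tendsto (fun a : ℝ => (a - |v.re|) ^ 2) atTop atTop :=
      (tendsto_pow_atTop two_ne_zero).comp (tendsto_atTop_add_const_right _ _ tendsto_id)
    simpa [← sub_eq_add_neg] using ((Real.tendsto_exp_atBot.comp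
      (tendsto_atBot_add_const_left _ _ (tendsto_neg_atTop_atBot.comp hsq))).const_mul
      (2 / √π)).mul_const ‖v‖
  have hshift : Tendsto (fun a : ℝ => cerf (a + v) - cerf a) atTop (𝓝 0) :=
    squeeze_zero_norm' ((eventually_ge_atTop |v.re|).mono fun a ha =>
      norm_cerf_add_sub_cerf_le v ha) hdecay
  simpa [add_comm] using hshift.add tendsto_cerf_ofReal_atTop

theorem tendsto_fz_atBot (z : ℂ) : Tendsto (fz z) atBot (𝓝 0) := by
  have hlim := (tendsto_cerf_add_atTop (√2 * z)).comp
    (tendsto_neg_atBot_atTop.const_mul_atTop (Real.sqrt_pos.mpr two_pos))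
  convert (hlim.const_sub 1).const_mul (1 / 2 : ℂ) using 2 with u
  · simp only [fz, cerfc, Function.comp_apply]
    push_cast
    ring_nf
  · norm_num

theorem tendsto_fz_atTop (z : ℂ) : Tendsto (fz z) atTop (𝓝 1) := by
  have hlim := (tendsto_cerf_add_atTop (-(√2 * z))).comp
    (tendsto_id.const_mul_atTop (Real.sqrt_pos.mpr two_pos))
  convert (hlim.const_add 1).const_mul (1 / 2 : ℂ) using 2 with u
  · simp only [fz, cerfc, Function.comp_apply, id]
    rw [← neg_neg (√2 * (z - u) : ℂ), cerf_neg]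
    push_cast
    ring_nf
  · norm_num

theorem hasDerivAt_fz (z : ℂ) (u : ℝ) :
    HasDerivAt (fz z) (√2 / √π * cexp (-(√2 * (z - u)) ^ 2)) u := by
  have hinner : HasDerivAt (fun ζ : ℂ => (√2 : ℂ) * (z - ζ)) (-√2) u := by
    simpa using ((hasDerivAt_id (u : ℂ)).const_sub z).const_mul (√2 : ℂ)
  have h := (((hasDerivAt_cerf _).comp (u : ℂ) hinner).const_sub 1).const_mul (1 / 2 : ℂ)
  exact (h.congr_deriv (by ring)).comp_ofReal

theorem continuous_fz (z : ℂ) : Continuous (fz z) :=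
  continuous_iff_continuousAt.mpr fun u => (hasDerivAt_fz z u).continuousAt

theorem exists_norm_fz_le (z : ℂ) : ∃ C, ∀ u, ‖fz z u‖ ≤ C := by
  obtain ⟨C, hC⟩ := isBounded_iff_forall_norm_le.mp
    ((continuous_fz z).isBounded_range_iff_isBigO_atTop_atBot.mpr
      ⟨(tendsto_fz_atTop z).isBigO_one ℝ, (tendsto_fz_atBot z).isBigO_one ℝ⟩)
  exact ⟨C, fun u => hC _ (Set.mem_range_self u)⟩

theorem integrable_deriv_fz (z : ℂ) : Integrable (deriv (fz z)) := by
  have hsq : ((√2 : ℝ) : ℂ) ^ 2 = 2 := by exact_mod_cast Real.sq_sqrt zero_le_two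
  rw [funext fun u => (hasDerivAt_fz z u).deriv]
  refine ((integrable_cexp_quadratic (b := 2) (by simp) (4 * z) (-2 * z ^ 2)).const_mul
    (√2 / √π : ℂ)).congr (ae_of_all _ fun u => ?_)
  dsimp only
  congr 2
  linear_combination (z - u) ^ 2 * hsq

theorem integrable_Wr (z w : ℂ) : Integrable (Wr z w) := by
  obtain ⟨Cz, hCz⟩ := exists_norm_fz_le z
  obtain ⟨Cw, hCw⟩ := exists_norm_fz_le w
  exact ((integrable_deriv_fz z).bdd_mul (continuous_fz w).aestronglyMeasurable
    (ae_of_all _ hCw)).sub ((integrable_deriv_fz w).bdd_mul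
      (continuous_fz z).aestronglyMeasurable (ae_of_all _ hCz))

/-- As `ρ → ∞`, `κ^ℝ(z,w) → κ^W(z,w)` for fixed `z, w`. -/
theorem kappaR_tendsto_kappaW (z w : ℂ) :
    Tendsto (fun ρ : ℝ => kappaR ρ z w) atTop (nhds (kappaW z w)) := by
  have ha : Tendsto (fun ρ : ℝ => ρ / (2 * √2)) atTop atTop :=
    tendsto_id.atTop_div_const (by positivity)
  have hna : Tendsto (fun ρ : ℝ => -(ρ / (2 * √2))) atTop atBot :=
    tendsto_neg_atTop_atBot.comp ha
  have hbulk := intervalIntegral_tendsto_integral (integrable_Wr z w) hna ha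
  have hbdry := (((tendsto_fz_atTop w).comp ha).mul ((tendsto_fz_atBot z).comp hna)).sub
    (((tendsto_fz_atTop z).comp ha).mul ((tendsto_fz_atBot w).comp hna))
  simpa [kappaR, kappaW, add_sub_assoc] using ((hbulk.add hbdry).const_mul
    ((√π : ℂ) * cexp (z ^ 2 + w ^ 2)))
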